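/- arXiv:2103.09452 — 3 statements merged into one kernel-verified Lean document; each statement's English description precedes it below -/
import Mathlib

section
/- If ‖(Ω + A)^{-1}‖₂ < 1 / (‖A - Ω‖₂ + 2‖B‖₂), x* solves the GAVE A x - B |x| = b, and x^(k) satisfies the NMN iteration (Ω + A) x^(k+1) = (Ω - A) x^(k) + 2(B |x^(k)| + b), then ‖x^(k+1) - x*‖₂ ≤ c ‖x^(k) - x*‖₂ for some constant c < 1 independent of k; consequently x^(k) converges to x* from any initial vector. -/
open Matrix Filter
noncomputable def spec {n : ℕ} (A : Matrix (Fin n) (Fin n) ℝ) : ℝ :=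
  ‖Matrix.toEuclideanCLM (𝕜 := ℝ) A‖
noncomputable def enorm2 {n : ℕ} (x : Fin n → ℝ) : ℝ :=
  ‖(WithLp.equiv 2 (Fin n → ℝ)).symm x‖
def vabs {n : ℕ} (x : Fin n → ℝ) : Fin n → ℝ := fun i => |x i|
def entAbs {n : ℕ} (A : Matrix (Fin n) (Fin n) ℝ) : Matrix (Fin n) (Fin n) ℝ :=
  fun i j => |A i j|
def compMat {n : ℕ} (A : Matrix (Fin n) (Fin n) ℝ) : Matrix (Fin n) (Fin n) ℝ :=
  fun i j => if i = j then |A i j| else -|A i j|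
noncomputable def specRad {n : ℕ} (A : Matrix (Fin n) (Fin n) ℝ) : ENNReal :=
  spectralRadius ℂ (A.map Complex.ofReal)

/-!
Subtracting the equation, written as `(Ω + A) x* = (Ω - A) x* + 2 (B |x*| + b)`, from the
iteration gives `(Ω + A) eₖ₊₁ = (Ω - A) eₖ + 2 B (|xₖ| - |x*|)` for the error `eₖ = xₖ - x*`.
Since `||u| - |v|| ≤ |u - v|` componentwise, `‖eₖ₊₁‖ ≤ c ‖eₖ‖` with
`c = ‖(Ω + A)⁻¹‖ (‖A - Ω‖ + 2 ‖B‖) < 1`, and the errors decay geometrically.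
-/

theorem tendsto_zero_of_succ_le_mul {u : ℕ → ℝ} {c : ℝ} (hu : ∀ k, 0 ≤ u k) (hc₀ : 0 ≤ c)
    (hc₁ : c < 1) (h : ∀ k, u (k + 1) ≤ c * u k) : Tendsto u atTop (nhds 0) := by
  have hgeom := (tendsto_pow_atTop_nhds_zero_of_lt_one hc₀ hc₁).mul_const (u 0)
  rw [zero_mul] at hgeom
  exact squeeze_zero hu (fun k => le_geom hc₀ k fun j _ => h j) hgeom

section EuclideanNorms

variable {n : ℕ}

lemma spec_nonneg (M : Matrix (Fin n) (Fin n) ℝ) : 0 ≤ spec M := norm_nonneg _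

lemma spec_sub_comm (M N : Matrix (Fin n) (Fin n) ℝ) : spec (M - N) = spec (N - M) := by
  rw [spec, spec, ← neg_sub, map_neg, norm_neg]

lemma enorm2_nonneg (v : Fin n → ℝ) : 0 ≤ enorm2 v := norm_nonneg _

lemma enorm2_eq_norm_toLp (v : Fin n → ℝ) : enorm2 v = ‖WithLp.toLp 2 v‖ := rfl

lemma enorm2_add_le (u v : Fin n → ℝ) : enorm2 (u + v) ≤ enorm2 u + enorm2 v := by
  simp only [enorm2_eq_norm_toLp, WithLp.toLp_add]
  exact norm_add_le _ _

lemma enorm2_smul (c : ℝ) (v : Fin n → ℝ) : enorm2 (c • v) = |c| * enorm2 v := by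
  simp only [enorm2_eq_norm_toLp, WithLp.toLp_smul, norm_smul, Real.norm_eq_abs]

lemma enorm2_mulVec_le (M : Matrix (Fin n) (Fin n) ℝ) (v : Fin n → ℝ) :
    enorm2 (M *ᵥ v) ≤ spec M * enorm2 v := by
  have := (Matrix.toEuclideanCLM (𝕜 := ℝ) M).le_opNorm (WithLp.toLp 2 v)
  rwa [Matrix.toEuclideanCLM_toLp] at this

lemma enorm2_vabs_sub_vabs_le (u v : Fin n → ℝ) :
    enorm2 (vabs u - vabs v) ≤ enorm2 (u - v) := by
  simp only [enorm2_eq_norm_toLp, EuclideanSpace.norm_eq]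
  gcongr with i
  exact abs_abs_sub_abs_le_abs_sub (u i) (v i)

lemma tendsto_of_enorm2_sub_tendsto_zero {x : ℕ → Fin n → ℝ} {y : Fin n → ℝ}
    (h : Tendsto (fun k => enorm2 (x k - y)) atTop (nhds 0)) : Tendsto x atTop (nhds y) := by
  have hLp : Tendsto (fun k => WithLp.toLp 2 (x k)) atTop (nhds (WithLp.toLp 2 y)) := by
    rw [tendsto_iff_norm_sub_tendsto_zero]
    simpa only [enorm2_eq_norm_toLp, WithLp.toLp_sub] using h
  exact ((PiLp.continuous_ofLp 2 _).tendsto _).comp hLp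

end EuclideanNorms

section NMN

variable {n : ℕ} {A B Ω : Matrix (Fin n) (Fin n) ℝ} {b xs x y : Fin n → ℝ}

lemma nmn_error_eq (hsol : A *ᵥ xs - B *ᵥ vabs xs = b)
    (hstep : (Ω + A) *ᵥ y = (Ω - A) *ᵥ x + (2 : ℝ) • (B *ᵥ vabs x + b)) :
    (Ω + A) *ᵥ (y - xs) = (Ω - A) *ᵥ (x - xs) + (2 : ℝ) • B *ᵥ (vabs x - vabs xs) := by
  subst hsol
  simp only [mulVec_sub, add_mulVec, sub_mulVec, hstep]
  module

lemma enorm2_nmn_error_le (hinv : IsUnit (Ω + A).det) (hsol : A *ᵥ xs - B *ᵥ vabs xs = b)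
    (hstep : (Ω + A) *ᵥ y = (Ω - A) *ᵥ x + (2 : ℝ) • (B *ᵥ vabs x + b)) :
    enorm2 (y - xs) ≤ spec (Ω + A)⁻¹ * (spec (A - Ω) + 2 * spec B) * enorm2 (x - xs) := by
  have herr : y - xs = (Ω + A)⁻¹ *ᵥ ((Ω - A) *ᵥ (x - xs) + (2 : ℝ) • B *ᵥ (vabs x - vabs xs)) := by
    rw [← nmn_error_eq hsol hstep, mulVec_mulVec, nonsing_inv_mul _ hinv, one_mulVec]
  have hB : enorm2 (B *ᵥ (vabs x - vabs xs)) ≤ spec B * enorm2 (x - xs) :=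
    (enorm2_mulVec_le _ _).trans
      (mul_le_mul_of_nonneg_left (enorm2_vabs_sub_vabs_le x xs) (spec_nonneg B))
  calc enorm2 (y - xs)
      ≤ spec (Ω + A)⁻¹ * enorm2 ((Ω - A) *ᵥ (x - xs) + (2 : ℝ) • B *ᵥ (vabs x - vabs xs)) := by
        rw [herr]; exact enorm2_mulVec_le _ _
    _ ≤ spec (Ω + A)⁻¹ * (spec (A - Ω) * enorm2 (x - xs) + 2 * (spec B * enorm2 (x - xs))) := by
        gcongr
        · exact spec_nonneg _
        refine (enorm2_add_le _ _).trans (add_le_add ?_ ?_)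
        · rw [← spec_sub_comm]; exact enorm2_mulVec_le _ _
        · rw [enorm2_smul, abs_two]; gcongr
    _ = spec (Ω + A)⁻¹ * (spec (A - Ω) + 2 * spec B) * enorm2 (x - xs) := by ring

end NMN

theorem stmt1 {n : ℕ} (A B Ω : Matrix (Fin n) (Fin n) ℝ) (b xs : Fin n → ℝ)
    (hinv : IsUnit (Ω + A).det)
    (hcond : spec (Ω + A)⁻¹ < 1 / (spec (A - Ω) + 2 * spec B))
    (hsol : A.mulVec xs - B.mulVec (vabs xs) = b)
    (x : ℕ → Fin n → ℝ)
    (hit : ∀ k, (Ω + A).mulVec (x (k + 1)) =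
      (Ω - A).mulVec (x k) + (2 : ℝ) • (B.mulVec (vabs (x k)) + b)) :
    (∃ c : ℝ, c < 1 ∧ ∀ k, enorm2 (x (k + 1) - xs) ≤ c * enorm2 (x k - xs)) ∧
      Tendsto x atTop (nhds xs) := by
  set c := spec (Ω + A)⁻¹ * (spec (A - Ω) + 2 * spec B)
  have hd : 0 < spec (A - Ω) + 2 * spec B := one_div_pos.mp ((spec_nonneg _).trans_lt hcond)
  have hc₁ : c < 1 := (lt_div_iff₀ hd).mp hcond
  have hc₀ : 0 ≤ c := mul_nonneg (spec_nonneg _) hd.le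
  have hstep k := enorm2_nmn_error_le hinv hsol (hit k)
  refine ⟨⟨c, hc₁, hstep⟩, tendsto_of_enorm2_sub_tendsto_zero ?_⟩
  exact tendsto_zero_of_succ_le_mul (fun k => enorm2_nonneg _) hc₀ hc₁ hstep
end

section
/- Let A be an n×n real H-matrix (its comparison matrix ⟨A⟩ is a nonsingular M-matrix) with positive diagonal entries, and let Ω = ωI with ω > 0. Then A + Ω is invertible and |(A + Ω)^{-1}| ≤ (⟨A⟩ + Ω)^{-1} entrywise. -/
open Matrix Filter

/-! If `⟨B⟩` is monotone (`⟨B⟩ v ≥ 0 → v ≥ 0`), then the triangle inequality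
`⟨B⟩ |u| ≤ |B u|` makes `B` injective and gives `|B⁻¹| ≤ ⟨B⟩⁻¹` column by column.
For `B = A + ωI` we have `⟨B⟩ = ⟨A⟩ + ωI`, a Z-matrix mapping the positive vector
`x = ⟨A⟩⁻¹ 1` to `1 + ωx > 0`, and such Z-matrices are monotone by a minimum-ratio
argument. -/

section MonotoneMatrix

variable {ι : Type*} [Fintype ι]

theorem isUnit_det_of_mulVec_eq_zero {K : Type*} [Field K] [DecidableEq ι] {M : Matrix ι ι K}
    (h : ∀ v, M *ᵥ v = 0 → v = 0) : IsUnit M.det :=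
  isUnit_iff_ne_zero.mpr fun hdet => by
    obtain ⟨v, hv, hMv⟩ := Matrix.exists_mulVec_eq_zero_iff.mpr hdet
    exact hv (h v hMv)

/-- Monotone in the sense of Collatz. -/
def IsMonotoneMatrix (N : Matrix ι ι ℝ) : Prop :=
  ∀ v : ι → ℝ, 0 ≤ N *ᵥ v → 0 ≤ v

theorem IsMonotoneMatrix.isUnit_det [DecidableEq ι] {N : Matrix ι ι ℝ}
    (hN : IsMonotoneMatrix N) : IsUnit N.det :=
  isUnit_det_of_mulVec_eq_zero fun v hv =>
    le_antisymm (neg_nonneg.mp (hN (-v) (by rw [Matrix.mulVec_neg, hv, neg_zero])))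
      (hN v hv.ge)

theorem isMonotoneMatrix_of_mulVec_pos {N : Matrix ι ι ℝ}
    (hZ : ∀ i j, i ≠ j → N i j ≤ 0) {x : ι → ℝ} (hx : ∀ i, 0 < x i)
    (hNx : ∀ i, 0 < (N *ᵥ x) i) : IsMonotoneMatrix N := by
  intro u hu
  cases isEmpty_or_nonempty ι
  · exact fun i => isEmptyElim i
  obtain ⟨i₀, -, hmin⟩ :=
    Finset.univ.exists_min_image (fun i => u i / x i) Finset.univ_nonempty
  set c := u i₀ / x i₀
  have hcx : ∀ k, c * x k ≤ u k := fun k =>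
    (le_div_iff₀ (hx k)).mp (hmin k (Finset.mem_univ k))
  have hv₀ : u i₀ - c * x i₀ = 0 := by rw [div_mul_cancel₀ _ (hx i₀).ne', sub_self]
  -- `v = u - c x` is nonnegative and vanishes at `i₀`, so the Z-sign pattern gives
  -- `(N v) i₀ ≤ 0`.
  have hNv : (N *ᵥ (u - c • x)) i₀ ≤ 0 := by
    refine Finset.sum_nonpos fun k _ => ?_
    rcases eq_or_ne i₀ k with rfl | hk
    · simp [hv₀]
    · exact mul_nonpos_of_nonpos_of_nonneg (hZ i₀ k hk) (by simpa using hcx k)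
  have hc : 0 ≤ c := by
    rw [Matrix.mulVec_sub, Matrix.mulVec_smul, Pi.sub_apply, Pi.smul_apply, smul_eq_mul] at hNv
    have hNu : 0 ≤ (N *ᵥ u) i₀ := hu i₀
    exact (mul_nonneg_iff_of_pos_right (hNx i₀)).mp (by linarith)
  exact fun k => (mul_nonneg hc (hx k).le).trans (hcx k)

theorem inv_mulVec_one_pos [DecidableEq ι] {M : Matrix ι ι ℝ} (hM : IsUnit M.det)
    (hMinv : ∀ i j, 0 ≤ M⁻¹ i j) (i : ι) : 0 < (M⁻¹ *ᵥ 1) i := by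
  refine (Finset.sum_nonneg fun j _ => by simpa using hMinv i j).lt_of_ne fun hzero => ?_
  -- A zero row sum would make row `i` of `M⁻¹` vanish, contradicting `M⁻¹ M = 1`.
  have hrow : ∀ j, M⁻¹ i j = 0 := fun j =>
    (Finset.sum_eq_zero_iff_of_nonneg fun j _ => by simpa using hMinv i j).mp
      (by simpa [Matrix.mulVec, dotProduct] using hzero.symm) j (Finset.mem_univ j)
  have h := congrFun (congrFun (Matrix.nonsing_inv_mul M hM) i) i
  simp [Matrix.mul_apply, hrow] at h

end MonotoneMatrix

section ComparisonMatrix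

variable {n : ℕ}

theorem compMat_apply_nonpos_of_ne (B : Matrix (Fin n) (Fin n) ℝ) {i j : Fin n}
    (hij : i ≠ j) : compMat B i j ≤ 0 := by
  simp [compMat, hij]

theorem compMat_add_smul_one (A : Matrix (Fin n) (Fin n) ℝ) (hdiag : ∀ i, 0 ≤ A i i)
    {ω : ℝ} (hω : 0 ≤ ω) : compMat (A + ω • 1) = compMat A + ω • 1 := by
  ext i j
  rcases eq_or_ne i j with rfl | hij
  · simp [compMat, abs_of_nonneg (hdiag i), abs_of_nonneg (add_nonneg (hdiag i) hω)]
  · simp [compMat, hij]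

theorem compMat_mulVec_vabs_le (B : Matrix (Fin n) (Fin n) ℝ) (u : Fin n → ℝ) :
    compMat B *ᵥ vabs u ≤ vabs (B *ᵥ u) := by
  intro i
  have hsplit : ∀ f : Fin n → ℝ, ∑ k, f k = f i + ∑ k ∈ Finset.univ.erase i, f k := fun f =>
    (Finset.add_sum_erase _ f (Finset.mem_univ i)).symm
  have hdiag : compMat B i i * |u i| = |B i i * u i| := by
    rw [abs_mul]; exact congrArg (· * _) (if_pos rfl)
  have hoff : ∑ k ∈ Finset.univ.erase i, compMat B i k * |u k|
      = -∑ k ∈ Finset.univ.erase i, |B i k * u k| := by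
    rw [← Finset.sum_neg_distrib]
    refine Finset.sum_congr rfl fun k hk => ?_
    simp [compMat, (Finset.ne_of_mem_erase hk).symm, abs_mul]
  simp only [vabs, Matrix.mulVec, dotProduct]
  rw [hsplit, hsplit fun k => B i k * u k, hdiag, hoff]
  have := abs_sub_abs_le_abs_add (B i i * u i) (∑ k ∈ Finset.univ.erase i, B i k * u k)
  linarith [Finset.abs_sum_le_sum_abs (fun k => B i k * u k) (Finset.univ.erase i)]

theorem isUnit_det_and_abs_inv_le_of_isMonotoneMatrix_compMat {B : Matrix (Fin n) (Fin n) ℝ}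
    (hB : IsMonotoneMatrix (compMat B)) :
    IsUnit B.det ∧ ∀ i j, |B⁻¹ i j| ≤ (compMat B)⁻¹ i j := by
  have hvabs_zero : vabs (0 : Fin n → ℝ) = 0 := funext fun _ => abs_zero
  have hBunit : IsUnit B.det := isUnit_det_of_mulVec_eq_zero fun u hu => by
    have h := hB (-vabs u) (by
      rw [Matrix.mulVec_neg, neg_nonneg]
      simpa [hu, hvabs_zero] using compMat_mulVec_vabs_le B u)
    exact funext fun k => abs_nonpos_iff.mp (by simpa [vabs] using h k)
  refine ⟨hBunit, fun i j => ?_⟩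
  set e : Fin n → ℝ := Pi.single j 1
  have hu : B *ᵥ (B⁻¹ *ᵥ e) = e := by
    rw [Matrix.mulVec_mulVec, Matrix.mul_nonsing_inv _ hBunit, Matrix.one_mulVec]
  have hw : compMat B *ᵥ ((compMat B)⁻¹ *ᵥ e) = e := by
    rw [Matrix.mulVec_mulVec, Matrix.mul_nonsing_inv _ hB.isUnit_det, Matrix.one_mulVec]
  have he : vabs e = e := funext fun k => abs_of_nonneg <| by
    simp only [e, Pi.single_apply]; split_ifs <;> norm_num
  have hle := hB ((compMat B)⁻¹ *ᵥ e - vabs (B⁻¹ *ᵥ e)) (by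
    rw [Matrix.mulVec_sub, hw, sub_nonneg]
    exact (compMat_mulVec_vabs_le B _).trans (by rw [hu, he])) i
  simpa [e, vabs, sub_nonneg, Matrix.mulVec_single_one] using hle

end ComparisonMatrix

theorem stmt9 {n : ℕ} (A : Matrix (Fin n) (Fin n) ℝ)
    (hM : IsUnit (compMat A).det) (hMinv : ∀ i j, 0 ≤ (compMat A)⁻¹ i j)
    (hdiag : ∀ i, 0 < A i i)
    (ω : ℝ) (hω : 0 < ω) :
    IsUnit (A + ω • (1 : Matrix (Fin n) (Fin n) ℝ)).det ∧
      ∀ i j, |(A + ω • (1 : Matrix (Fin n) (Fin n) ℝ))⁻¹ i j| ≤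
        (compMat A + ω • (1 : Matrix (Fin n) (Fin n) ℝ))⁻¹ i j := by
  set x := (compMat A)⁻¹ *ᵥ 1
  have hx : ∀ i, 0 < x i := inv_mulVec_one_pos hM hMinv
  have hNx : ∀ i, 0 < ((compMat A + ω • 1) *ᵥ x) i := fun i => by
    rw [Matrix.add_mulVec, Matrix.smul_mulVec, Matrix.one_mulVec, Matrix.mulVec_mulVec,
      Matrix.mul_nonsing_inv _ hM, Matrix.one_mulVec]
    simpa using add_pos_of_pos_of_nonneg one_pos (mul_nonneg hω.le (hx i).le)
  rw [← compMat_add_smul_one A (fun i => (hdiag i).le) hω.le] at hNx ⊢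
  exact isUnit_det_and_abs_inv_le_of_isMonotoneMatrix_compMat <|
    isMonotoneMatrix_of_mulVec_pos (fun i j => compMat_apply_nonpos_of_ne _) hx hNx
end

section
/- Let M be an n×n real matrix and q ∈ ℝ^n. If z solves the linear complementarity problem z ≥ 0, Mz + q ≥ 0, zᵀ(Mz + q) = 0, then x := ((M - I)z + q)/2 satisfies the generalized absolute value equation (M + I)x - (M - I)|x| = q. -/
/-! With `w = Mz + q` one has `x = (w - z)/2`, and complementarity gives `|x| = (w + z)/2`;
then `(M + I)(w - z) - (M - I)(w + z) = 2(w - Mz) = 2q`. -/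

open Matrix Filter

section Complementarity

variable {ι α : Type*}

theorem abs_sub_eq_add_of_eq_zero_or_eq_zero [AddCommGroup α] [LinearOrder α]
    [IsOrderedAddMonoid α] {a b : α} (ha : 0 ≤ a) (hb : 0 ≤ b) (hab : a = 0 ∨ b = 0) :
    |a - b| = a + b := by
  rcases hab with rfl | rfl
  · simp [abs_of_nonneg hb]
  · simp [abs_of_nonneg ha]

variable [Fintype ι] [Ring α] [LinearOrder α] [IsStrictOrderedRing α]

theorem mul_eq_zero_of_dotProduct_eq_zero {z w : ι → α} (hz : 0 ≤ z) (hw : 0 ≤ w)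
    (hzw : z ⬝ᵥ w = 0) (i : ι) : z i * w i = 0 :=
  (Finset.sum_eq_zero_iff_of_nonneg fun j _ => mul_nonneg (hz j) (hw j)).mp hzw i
    (Finset.mem_univ i)

theorem abs_sub_eq_add_of_dotProduct_eq_zero {z w : ι → α} (hz : 0 ≤ z) (hw : 0 ≤ w)
    (hzw : z ⬝ᵥ w = 0) : |w - z| = w + z := by
  funext i
  simp only [Pi.abs_apply, Pi.sub_apply, Pi.add_apply]
  refine abs_sub_eq_add_of_eq_zero_or_eq_zero (hw i) (hz i) ?_
  exact (mul_eq_zero.mp (mul_eq_zero_of_dotProduct_eq_zero hz hw hzw i)).symm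

end Complementarity

theorem mulVec_add_one_sub_mulVec_sub_one {ι R : Type*} [Fintype ι] [DecidableEq ι]
    [CommRing R] (M : Matrix ι ι R) (u v : ι → R) :
    (M + 1) *ᵥ (u - v) - (M - 1) *ᵥ (u + v) = (2 : R) • (u - M *ᵥ v) := by
  simp only [add_mulVec, sub_mulVec, mulVec_add, mulVec_sub, one_mulVec, two_smul]
  abel

theorem vabs_eq_abs {n : ℕ} (x : Fin n → ℝ) : vabs x = |x| :=
  funext fun i => (Pi.abs_apply x i).symm

theorem stmt12 {n : ℕ} (M : Matrix (Fin n) (Fin n) ℝ) (q z x : Fin n → ℝ)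
    (hz : ∀ i, 0 ≤ z i) (hw : ∀ i, 0 ≤ (M.mulVec z + q) i)
    (hc : z ⬝ᵥ (M.mulVec z + q) = 0)
    (hx : x = (2 : ℝ)⁻¹ • ((M - 1).mulVec z + q)) :
    (M + 1).mulVec x - (M - 1).mulVec (vabs x) = q := by
  set w := M *ᵥ z + q with hw_def
  have hx_w : x = (2 : ℝ)⁻¹ • (w - z) := by
    rw [hx, sub_mulVec, one_mulVec, hw_def]
    abel_nf
  have habs_x : vabs x = (2 : ℝ)⁻¹ • (w + z) := by
    rw [vabs_eq_abs, hx_w, ← abs_sub_eq_add_of_dotProduct_eq_zero hz hw hc]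
    funext i
    simp [abs_mul]
  rw [habs_x, hx_w, mulVec_smul, mulVec_smul, ← smul_sub, mulVec_add_one_sub_mulVec_sub_one,
    smul_smul, inv_mul_cancel₀ two_ne_zero, one_smul, hw_def, add_sub_cancel_left]
end
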